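/- If X is a C-maximal set of vertices of a graph G, then every class of the partition D(X) consists of pairwise similar vertices; that is, D(X) coincides with the partition of Z(X) induced by similarity classes of G. -/
import Mathlib


/-- For `u, v ∉ X`, `u ≡_X v` iff `u` and `v` have the same neighborhood inside `X`. -/
def SimpleGraph.EqOn {V : Type*} (G : SimpleGraph V) (X : Set V) (u v : V) : Prop :=
  ∀ x ∈ X, (G.Adj u x ↔ G.Adj v x)

/-- The `≡_X`-class of a vertex `u ∉ X`, as a subset of the complement of `X`. -/
def SimpleGraph.classOf {V : Type*} (G : SimpleGraph V) (X : Set V) (u : V) : Set V :=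
  {v | v ∉ X ∧ G.EqOn X u v}

/-- The partition `C(X)` of the complement of `X` into `≡_X`-classes. -/
def SimpleGraph.classes {V : Type*} (G : SimpleGraph V) (X : Set V) : Set (Set V) :=
  {S | ∃ u, u ∉ X ∧ S = G.classOf X u}

/-- `X` is `C`-maximal if adding a single vertex never increases the number of classes. -/
def SimpleGraph.CMaximal {V : Type*} (G : SimpleGraph V) (X : Set V) : Prop :=
  ∀ u ∉ X, (G.classes (X ∪ {u})).ncard ≤ (G.classes X).ncard
/-- Vertices `u` and `v` of a graph are *similar* if the transposition `(u v)`
is an automorphism of the graph. -/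
def SimpleGraph.IsSim {V : Type*} [DecidableEq V] (G : SimpleGraph V) (u v : V) : Prop :=
  ∀ x y : V, G.Adj x y ↔ G.Adj (Equiv.swap u v x) (Equiv.swap u v y)

/-- `Y(X)`: the union of all singleton classes of `C(X)`. -/
def SimpleGraph.Yset {V : Type*} (G : SimpleGraph V) (X : Set V) : Set V :=
  {y | y ∉ X ∧ G.classOf X y = {y}}

/-- `Z(X) = V(G) \ (X ∪ Y(X))`. -/
def SimpleGraph.Zset {V : Type*} (G : SimpleGraph V) (X : Set V) : Set V :=
  {z | z ∉ X ∧ z ∉ G.Yset X}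

namespace SimpleGraph

variable {V : Type*} (G : SimpleGraph V)

lemma eqOn_refl (X : Set V) (u : V) : G.EqOn X u u := fun _ _ => Iff.rfl

lemma eqOn_symm {X : Set V} {u v : V} (h : G.EqOn X u v) : G.EqOn X v u :=
  fun x hx => (h x hx).symm

lemma eqOn_trans {X : Set V} {u v w : V} (h1 : G.EqOn X u v) (h2 : G.EqOn X v w) :
    G.EqOn X u w := fun x hx => (h1 x hx).trans (h2 x hx)

lemma eqOn_mono {X Y : Set V} (hXY : X ⊆ Y) {u v : V} (h : G.EqOn Y u v) :
    G.EqOn X u v := fun x hx => h x (hXY hx)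

lemma mem_classOf_self {X : Set V} {u : V} (hu : u ∉ X) : u ∈ G.classOf X u :=
  ⟨hu, G.eqOn_refl X u⟩

lemma classOf_eq_of_mem {X : Set V} {u v : V} (hv : v ∈ G.classOf X u) :
    G.classOf X v = G.classOf X u := by
  ext w
  exact ⟨fun hw => ⟨hw.1, G.eqOn_trans hv.2 hw.2⟩,
    fun hw => ⟨hw.1, G.eqOn_trans (G.eqOn_symm hv.2) hw.2⟩⟩

/-- Key lemma: if `X` is `C`-maximal and `u` lies in a non-singleton class (i.e. `u ∈ Z(X)`),
then adjacency to `u` is constant on every `≡_X`-class minus `u`. -/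
lemma key {V : Type*} [Fintype V] [DecidableEq V] (G : SimpleGraph V) {X : Set V}
    (hX : G.CMaximal X) {u a b : V} (hu : u ∈ G.Zset X)
    (ha : a ∉ X) (hb : b ∉ X) (hab : G.EqOn X a b) (hau : a ≠ u) (hbu : b ≠ u) :
    (G.Adj a u ↔ G.Adj b u) := by
  by_contra hcon
  set X' : Set V := X ∪ {u} with hX'
  have hXX' : X ⊆ X' := Set.subset_union_left
  have huX' : u ∈ X' := Set.mem_union_right _ rfl
  have haX' : a ∉ X' := by
    intro h
    rcases h with h | h
    · exact ha h
    · exact hau h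
  have hbX' : b ∉ X' := by
    intro h
    rcases h with h | h
    · exact hb h
    · exact hbu h
  -- `a` and `b` are not `≡_{X'}`-equivalent
  have hnab : ¬ G.EqOn X' a b := fun hE => hcon (hE u huX')
  -- the map sending an `X'`-class to the `X`-class containing it, representative-free
  set Φ : Set V → Set V := fun S => {v | v ∉ X ∧ ∃ s ∈ S, G.EqOn X s v} with hΦ
  have hΦ_class : ∀ w ∉ X', Φ (G.classOf X' w) = G.classOf X w := by
    intro w hw
    ext v
    constructor
    · rintro ⟨hvX, s, hs, hsv⟩
      exact ⟨hvX, G.eqOn_trans (G.eqOn_mono hXX' hs.2) hsv⟩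
    · rintro ⟨hvX, hwv⟩
      exact ⟨hvX, w, G.mem_classOf_self hw, hwv⟩
  -- surjectivity of Φ from `classes X' \ {classOf X' a}` onto `classes X`
  have hsurj : G.classes X ⊆ Φ '' (G.classes X' \ {G.classOf X' a}) := by
    rintro C ⟨w, hw, rfl⟩
    -- find w' ∉ X' with classOf X w' = classOf X w
    obtain ⟨w', hw'X', hw'c⟩ : ∃ w', w' ∉ X' ∧ G.classOf X w' = G.classOf X w := by
      by_cases hwu : w = u
      · subst hwu
        have hne : G.classOf X w ≠ {w} := fun h => hu.2 ⟨hu.1, h⟩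
        have : ∃ w', w' ∈ G.classOf X w ∧ w' ≠ w := by
          by_contra hno
          push_neg at hno
          apply hne
          ext z
          constructor
          · intro hz
            by_contra hzw
            exact hzw (hno z hz)
          · rintro rfl
            exact G.mem_classOf_self hw
        obtain ⟨w', hw'mem, hw'ne⟩ := this
        refine ⟨w', ?_, G.classOf_eq_of_mem hw'mem⟩
        intro h
        rcases h with h | h
        · exact hw'mem.1 h
        · exact hw'ne h
      · refine ⟨w, ?_, rfl⟩
        intro h
        rcases h with h | h
        · exact hw h
        · exact hwu h
    by_cases hSa : G.classOf X' w' = G.classOf X' a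
    · -- use b instead
      refine ⟨G.classOf X' b, ⟨⟨b, hbX', rfl⟩, ?_⟩, ?_⟩
      · intro h
        simp only [Set.mem_singleton_iff] at h
        have hbmem : b ∈ G.classOf X' a := h ▸ G.mem_classOf_self hbX'
        exact hnab hbmem.2
      · rw [hΦ_class b hbX']
        have hamem : a ∈ G.classOf X' w' := hSa ▸ G.mem_classOf_self haX'
        have h1 : G.classOf X b = G.classOf X a := by
          apply G.classOf_eq_of_mem
          exact ⟨hb, hab⟩
        have h2 : G.classOf X a = G.classOf X w' := by
          apply G.classOf_eq_of_mem
          exact ⟨ha, G.eqOn_mono hXX' hamem.2⟩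
        rw [h1, h2, hw'c]
    · refine ⟨G.classOf X' w', ⟨⟨w', hw'X', rfl⟩, hSa⟩, ?_⟩
      rw [hΦ_class w' hw'X', hw'c]
  -- counting
  have hfin : (G.classes X').Finite := Set.toFinite _
  have h1 : (G.classes X).ncard ≤ (Φ '' (G.classes X' \ {G.classOf X' a})).ncard :=
    Set.ncard_le_ncard hsurj (Set.toFinite _)
  have h2 : (Φ '' (G.classes X' \ {G.classOf X' a})).ncard
      ≤ (G.classes X' \ {G.classOf X' a}).ncard :=
    Set.ncard_image_le (Set.toFinite _)
  have h3 : (G.classes X' \ {G.classOf X' a}).ncard < (G.classes X').ncard :=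
    Set.ncard_diff_singleton_lt_of_mem ⟨a, haX', rfl⟩ hfin
  have h4 : (G.classes X').ncard ≤ (G.classes X).ncard := hX u hu.1
  omega

end SimpleGraph

/-- If `X` is `C`-maximal then the partition `D(X) = C(X ∪ Y(X))` of `Z(X)`
coincides with the partition of `Z(X)` into similarity classes: two vertices of
`Z(X)` are `≡_{X ∪ Y(X)}`-equivalent iff they are similar. -/
theorem dClasses_eq_simClasses_of_cMaximal {V : Type*} [Fintype V] [DecidableEq V]
    (G : SimpleGraph V) (X : Set V) (hX : G.CMaximal X) :
    ∀ u ∈ G.Zset X, ∀ v ∈ G.Zset X, (G.EqOn (X ∪ G.Yset X) u v ↔ G.IsSim u v) := by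
  intro u hu v hv
  constructor
  · intro h
    -- main claim: for y ∉ {u, v}, Adj u y ↔ Adj v y
    have claim : ∀ y : V, y ≠ u → y ≠ v → (G.Adj u y ↔ G.Adj v y) := by
      intro y hyu hyv
      by_cases hy : y ∈ X ∪ G.Yset X
      · exact h y hy
      · -- y ∈ Z(X)
        have hyX : y ∉ X := fun hx => hy (Set.mem_union_left _ hx)
        have hyY : y ∉ G.Yset X := fun hx => hy (Set.mem_union_right _ hx)
        exact G.key hX (u := y) (a := u) (b := v) ⟨hyX, hyY⟩ hu.1 hv.1
          (G.eqOn_mono Set.subset_union_left h) (Ne.symm hyu) (Ne.symm hyv)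
    have claim2 : ∀ x y : V, G.Adj x y →
        G.Adj (Equiv.swap u v x) (Equiv.swap u v y) := by
      have h2 : ∀ x y : V, x ≠ u → x ≠ v → G.Adj x y →
          G.Adj x (Equiv.swap u v y) := by
        intro x y hxu hxv hadj
        rcases eq_or_ne y u with hyu | hyu
        · rw [hyu, Equiv.swap_apply_left]
          rw [hyu] at hadj
          exact ((claim x hxu hxv).mp hadj.symm).symm
        · rcases eq_or_ne y v with hyv | hyv
          · rw [hyv, Equiv.swap_apply_right]
            rw [hyv] at hadj
            exact ((claim x hxu hxv).mpr hadj.symm).symm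
          · rw [Equiv.swap_apply_of_ne_of_ne hyu hyv]
            exact hadj
      intro x y hadj
      rcases eq_or_ne x u with hxu | hxu
      · rw [hxu, Equiv.swap_apply_left]
        rw [hxu] at hadj
        rcases eq_or_ne y u with hyu | hyu
        · rw [hyu] at hadj
          exact absurd hadj (G.irrefl)
        · rcases eq_or_ne y v with hyv | hyv
          · rw [hyv, Equiv.swap_apply_right]
            rw [hyv] at hadj
            exact hadj.symm
          · rw [Equiv.swap_apply_of_ne_of_ne hyu hyv]
            exact (claim y hyu hyv).mp hadj
      · rcases eq_or_ne x v with hxv | hxv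
        · rw [hxv, Equiv.swap_apply_right]
          rw [hxv] at hadj
          rcases eq_or_ne y u with hyu | hyu
          · rw [hyu, Equiv.swap_apply_left]
            rw [hyu] at hadj
            exact hadj.symm
          · rcases eq_or_ne y v with hyv | hyv
            · rw [hyv] at hadj
              exact absurd hadj (G.irrefl)
            · rw [Equiv.swap_apply_of_ne_of_ne hyu hyv]
              exact (claim y hyu hyv).mpr hadj
        · rw [Equiv.swap_apply_of_ne_of_ne hxu hxv]
          exact h2 x y hxu hxv hadj
    intro x y
    constructor
    · exact claim2 x y
    · intro hadj
      have := claim2 _ _ hadj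
      rwa [Equiv.swap_apply_self, Equiv.swap_apply_self] at this
  · -- similarity implies the EqOn condition
    intro hsim x hx
    have hxu : x ≠ u := by
      rintro rfl
      rcases hx with h | h
      · exact hu.1 h
      · exact hu.2 h
    have hxv : x ≠ v := by
      rintro rfl
      rcases hx with h | h
      · exact hv.1 h
      · exact hv.2 h
    have := hsim u x
    rwa [Equiv.swap_apply_left, Equiv.swap_apply_of_ne_of_ne hxu hxv] at this
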